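/- arXiv:2509.15749 — 3 statements merged into one kernel-verified Lean document; each statement's English description precedes it below -/
import Mathlib

section
/- Let k ∈ ℝ^n and f, g ∈ ℝ^d be nonincreasingly ordered vectors (k_1 ≥ k_2 ≥ … ≥ k_n, and similarly for f and g) such that k_1 ≥ max(f_1, g_1) and k_n ≤ min(f_d, g_d). Then ‖(k ⊕ f)↓ − (k ⊕ g)↓‖_∞ ≤ max_{1 ≤ i, j ≤ n, |i−j| ≤ d} |k_i − k_j| ≤ d · max_{1 ≤ i ≤ n−1} (k_i − k_{i+1}). -/
/-- The nonincreasing rearrangement of a finite real vector. -/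
noncomputable def sortDesc {n : ℕ} (v : Fin n → ℝ) : Fin n → ℝ :=
  fun i => v (Tuple.sort (fun j => -v j) i)

/-- `max_{|i-j| ≤ d} |k_i - k_j|`. -/
noncomputable def pairMax (n d : ℕ) (hn : 0 < n) (k : Fin n → ℝ) : ℝ :=
  Finset.sup'
    (Finset.univ.filter fun p : Fin n × Fin n =>
      (p.1 : ℕ) ≤ (p.2 : ℕ) + d ∧ (p.2 : ℕ) ≤ (p.1 : ℕ) + d)
    ⟨(⟨0, hn⟩, ⟨0, hn⟩), by simp⟩
    fun p => |k p.1 - k p.2|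

/-- `max_{1 ≤ i ≤ n-1} (k_i - k_{i+1})`. -/
noncomputable def gapMax (n : ℕ) (hn : 2 ≤ n) (k : Fin n → ℝ) : ℝ :=
  Finset.sup' Finset.univ ⟨⟨0, by omega⟩, Finset.mem_univ _⟩
    fun i : Fin (n - 1) =>
      k (Fin.castLE (by omega) i) - k ⟨(i : ℕ) + 1, by have := i.isLt; omega⟩

lemma sortDesc_antitone {N : ℕ} (v : Fin N → ℝ) : Antitone (sortDesc v) := by
  intro i j hij
  have h := Tuple.monotone_sort (fun j => -v j) hij
  simpa [sortDesc] using h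

open Finset in
lemma sortDesc_card_filter {N : ℕ} (v : Fin N → ℝ) (P : ℝ → Prop) [DecidablePred P] :
    (univ.filter fun i => P (sortDesc v i)).card = (univ.filter fun i => P (v i)).card := by
  set σ := Tuple.sort (fun j => -v j)
  apply Finset.card_nbij' (i := fun i => σ i) (j := fun i => σ.symm i)
  · intro a ha; simp only [Finset.mem_coe, mem_filter, mem_univ, true_and, sortDesc] at *; exact (Finset.mem_filter.mp ha).2
  · intro a ha; simp only [Finset.mem_coe, mem_filter, mem_univ, true_and, sortDesc] at *
    exact Finset.mem_filter.mpr ⟨mem_univ _, by simpa [σ] using ha⟩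
  · intro a _; simp
  · intro a _; simp

open Finset in
lemma sortDesc_ge {N : ℕ} (v : Fin N → ℝ) (x : ℝ) (m : Fin N)
    (h : (m : ℕ) < (univ.filter fun i => x ≤ v i).card) : x ≤ sortDesc v m := by
  classical
  rw [← sortDesc_card_filter v (fun y => x ≤ y)] at h
  by_contra hc
  push_neg at hc
  have hsub : (univ.filter fun i => x ≤ sortDesc v i) ⊆ Finset.Iio m := by
    intro i hi
    simp only [mem_filter, mem_univ, true_and] at hi
    rw [Finset.mem_Iio]
    by_contra hle
    exact absurd (hi.trans (sortDesc_antitone v (not_lt.mp hle))) (not_le.mpr hc)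
  have := (Finset.card_le_card hsub).trans_eq (Fin.card_Iio m)
  omega

open Finset in
lemma sortDesc_le {N : ℕ} (v : Fin N → ℝ) (x : ℝ) (m : Fin N)
    (h : (univ.filter fun i => x < v i).card ≤ (m : ℕ)) : sortDesc v m ≤ x := by
  classical
  rw [← sortDesc_card_filter v (fun y => x < y)] at h
  by_contra hc
  push_neg at hc
  have hsub : Finset.Iic m ⊆ (univ.filter fun i => x < sortDesc v i) := by
    intro i hi
    rw [Finset.mem_Iic] at hi
    simp only [mem_filter, mem_univ, true_and]
    exact hc.trans_le (sortDesc_antitone v hi)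
  have := (Finset.card_le_card hsub).trans h
  rw [Fin.card_Iic] at this
  omega

open Finset in
lemma append_low {n d : ℕ} (hn : 0 < n) (hd : 0 < d) (k : Fin n → ℝ) (f : Fin d → ℝ)
    (hk : Antitone k) (hf : Antitone f) (hfd : k ⟨n - 1, by omega⟩ ≤ f ⟨d - 1, Nat.sub_lt hd Nat.one_pos⟩)
    (m : Fin (n + d)) :
    k ⟨min m.val (n - 1), by omega⟩ ≤ sortDesc (Fin.append k f) m := by
  classical
  apply sortDesc_ge
  rcases lt_or_ge m.val n with h | h
  · have hmin : min m.val (n - 1) = m.val := by omega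
    have hsub : ((Finset.Iic (⟨m.val, h⟩ : Fin n)).map (Fin.castAddEmb d)) ⊆
        (univ.filter fun i => k ⟨min m.val (n - 1), by omega⟩ ≤ Fin.append k f i) := by
      intro x hx
      simp only [Finset.mem_map, Finset.mem_Iic] at hx
      obtain ⟨j, hj, rfl⟩ := hx
      simp only [mem_filter, mem_univ, true_and, Fin.castAddEmb, Fin.castLEEmb]
      rw [show ((⟨Fin.castLE (by omega), by exact fun a b => by simp⟩ : Fin n ↪ Fin (n+d)) j)
        = Fin.castAdd d j from rfl, Fin.append_left]
      refine hk ?_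
      rw [Fin.le_def] at hj ⊢
      simp only [Fin.val_mk] at hj ⊢
      omega
    have := Finset.card_le_card hsub
    rw [Finset.card_map, Fin.card_Iic] at this
    simp only [Fin.val_mk] at this
    omega
  · have hmin : min m.val (n - 1) = n - 1 := by omega
    have : (univ.filter fun i => k ⟨min m.val (n - 1), by omega⟩ ≤ Fin.append k f i) = univ := by
      ext i
      simp only [mem_filter, mem_univ, true_and, iff_true]
      induction i using Fin.addCases with
      | left j => rw [Fin.append_left]; exact hk (by simp [Fin.le_def]; omega)
      | right j =>
        rw [Fin.append_right]
        have heq : (⟨min m.val (n-1), by omega⟩ : Fin n) = ⟨n-1, by omega⟩ := Fin.ext (by simpa using hmin)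
        calc k ⟨min m.val (n-1), by omega⟩ = k ⟨n-1, by omega⟩ := by rw [heq]
          _ ≤ f ⟨d-1, by omega⟩ := hfd
          _ ≤ f j := hf (by simp [Fin.le_def]; omega)
    rw [this, Finset.card_univ, Fintype.card_fin]
    omega

open Finset in
lemma append_high {n d : ℕ} (hn : 0 < n) (hd : 0 < d) (k : Fin n → ℝ) (f : Fin d → ℝ)
    (hk : Antitone k) (hf : Antitone f) (hf1 : f ⟨0, hd⟩ ≤ k ⟨0, hn⟩)
    (m : Fin (n + d)) :
    sortDesc (Fin.append k f) m ≤ k ⟨m.val - d, by omega⟩ := by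
  classical
  apply sortDesc_le
  rcases lt_or_ge m.val d with h | h
  · have : (univ.filter fun i => k ⟨m.val - d, by omega⟩ < Fin.append k f i) = ∅ := by
      rw [Finset.filter_eq_empty_iff]
      intro i _
      rw [not_lt]
      induction i using Fin.addCases with
      | left j =>
        rw [Fin.append_left]
        calc k j ≤ k ⟨0, hn⟩ := hk (by rw [Fin.le_def]; simp)
          _ = k ⟨m.val - d, by omega⟩ := by
            congr 1
            exact Fin.ext (by simp; omega)
      | right j =>
        rw [Fin.append_right]
        calc f j ≤ f ⟨0, hd⟩ := hf (by rw [Fin.le_def]; simp)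
          _ ≤ k ⟨0, hn⟩ := hf1
          _ = k ⟨m.val - d, by omega⟩ := by
            congr 1
            exact Fin.ext (by simp; omega)
    rw [this]
    simp
  · have hsub : (univ.filter fun i => k ⟨m.val - d, by omega⟩ < Fin.append k f i) ⊆
        ((Finset.Iio (⟨m.val - d, by omega⟩ : Fin n)).map (Fin.castAddEmb d)) ∪
          (univ.map (Fin.natAddEmb n)) := by
      intro i hi
      simp only [mem_filter, mem_univ, true_and] at hi
      rw [Finset.mem_union]
      induction i using Fin.addCases with
      | left j =>
        left
        rw [Fin.append_left] at hi
        simp only [Finset.mem_map, Finset.mem_Iio]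
        refine ⟨j, ?_, rfl⟩
        rw [Fin.lt_def]
        simp only [Fin.val_mk]
        by_contra hc
        exact absurd (hk (show (⟨m.val - d, by omega⟩ : Fin n) ≤ j by
          rw [Fin.le_def]; simp only [Fin.val_mk]; omega)) (not_le.mpr hi)
      | right j =>
        right
        simp only [Finset.mem_map]
        exact ⟨j, Finset.mem_univ _, rfl⟩
    have := (Finset.card_le_card hsub).trans (Finset.card_union_le _ _)
    rw [Finset.card_map, Finset.card_map, Fin.card_Iio, Finset.card_univ, Fintype.card_fin] at this
    simp only [Fin.val_mk] at this
    omega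

lemma gapMax_nonneg {n : ℕ} (hn : 2 ≤ n) (k : Fin n → ℝ) (hk : Antitone k) :
    0 ≤ gapMax n hn k := by
  refine le_trans ?_ (Finset.le_sup' _ (Finset.mem_univ (⟨0, by omega⟩ : Fin (n - 1))))
  simp only [sub_nonneg]
  exact hk (by rw [Fin.le_def]; simp)

lemma telescope {n : ℕ} (hn : 2 ≤ n) (k : Fin n → ℝ) (hk : Antitone k) :
    ∀ (t a : ℕ) (h : a + t < n),
      k ⟨a, by omega⟩ - k ⟨a + t, h⟩ ≤ (t : ℝ) * gapMax n hn k := by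
  intro t
  induction t with
  | zero => intro a h; simp
  | succ t ih =>
    intro a h
    have h1 : a + t < n := by omega
    have h2 := ih a h1
    have h3 : k ⟨a + t, h1⟩ - k ⟨a + t + 1, by omega⟩ ≤ gapMax n hn k := by
      refine le_trans (le_of_eq ?_) (Finset.le_sup' _ (Finset.mem_univ (⟨a + t, by omega⟩ : Fin (n - 1))))
      rfl
    push_cast
    have : (⟨a + (t + 1), h⟩ : Fin n) = ⟨a + t + 1, by omega⟩ := Fin.ext (by simp only [Fin.val_mk]; omega)
    rw [this]
    linarith

lemma pairMax_le {n : ℕ} (hn : 2 ≤ n) (d : ℕ) (k : Fin n → ℝ) (hk : Antitone k) :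
    pairMax n d (by omega) k ≤ d * gapMax n hn k := by
  apply Finset.sup'_le
  intro p hp
  simp only [Finset.mem_filter, Finset.mem_univ, true_and] at hp
  have hG := gapMax_nonneg hn k hk
  have key : ∀ a b : Fin n, a ≤ b → (b : ℕ) ≤ (a : ℕ) + d →
      |k a - k b| ≤ d * gapMax n hn k := by
    intro a b hab hbd
    have h1 : k b ≤ k a := hk hab
    rw [abs_of_nonneg (by linarith)]
    have ha : a = ⟨(a : ℕ), a.isLt⟩ := Fin.ext rfl
    have hb : b = ⟨(a : ℕ) + ((b : ℕ) - (a : ℕ)), by omega⟩ := Fin.ext (by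
      simp only [Fin.val_mk]
      have := Fin.le_def.mp hab
      omega)
    rw [ha, hb]
    refine le_trans (telescope hn k hk _ _ _) ?_
    refine mul_le_mul_of_nonneg_right ?_ hG
    exact_mod_cast Nat.cast_le.mpr (show (b : ℕ) - (a : ℕ) ≤ d by omega)
  rcases le_total p.1 p.2 with hle | hle
  · exact key p.1 p.2 hle hp.2
  · rw [abs_sub_comm]
    exact key p.2 p.1 hle hp.1

theorem list_sort_lemma (n d : ℕ) (hn : 2 ≤ n) (hd : 0 < d)
    (k : Fin n → ℝ) (f g : Fin d → ℝ)
    (hk : Antitone k) (hf : Antitone f) (hg : Antitone g)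
    (hf1 : f ⟨0, hd⟩ ≤ k ⟨0, by omega⟩) (hg1 : g ⟨0, hd⟩ ≤ k ⟨0, by omega⟩)
    (hfd : k ⟨n - 1, by omega⟩ ≤ f ⟨d - 1, by omega⟩)
    (hgd : k ⟨n - 1, by omega⟩ ≤ g ⟨d - 1, by omega⟩) :
    ‖sortDesc (Fin.append k f) - sortDesc (Fin.append k g)‖ ≤
        pairMax n d (by omega) k ∧
      pairMax n d (by omega) k ≤ d * gapMax n hn k := by
  constructor
  · have hnn : 0 ≤ pairMax n d (by omega) k := by
      have h0 : ((⟨0, by omega⟩, ⟨0, by omega⟩) : Fin n × Fin n) ∈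
          (Finset.univ.filter fun p : Fin n × Fin n =>
            (p.1 : ℕ) ≤ (p.2 : ℕ) + d ∧ (p.2 : ℕ) ≤ (p.1 : ℕ) + d) := by simp
      have := Finset.le_sup' (fun p : Fin n × Fin n => |k p.1 - k p.2|) h0
      simpa [pairMax] using this
    rw [pi_norm_le_iff_of_nonneg hnn]
    intro m
    rw [Pi.sub_apply, Real.norm_eq_abs]
    have hm := m.isLt
    have l1 := append_low (by omega) hd k f hk hf hfd m
    have l2 := append_low (by omega) hd k g hk hg hgd m
    have u1 := append_high (by omega) hd k f hk hf hf1 m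
    have u2 := append_high (by omega) hd k g hk hg hg1 m
    have hmem : (((⟨m.val - d, by omega⟩ : Fin n), (⟨min m.val (n-1), by omega⟩ : Fin n))
        : Fin n × Fin n) ∈
        (Finset.univ.filter fun p : Fin n × Fin n =>
          (p.1 : ℕ) ≤ (p.2 : ℕ) + d ∧ (p.2 : ℕ) ≤ (p.1 : ℕ) + d) := by
      simp only [Finset.mem_filter, Finset.mem_univ, true_and, Fin.val_mk]
      omega
    have hp := Finset.le_sup' (fun p : Fin n × Fin n => |k p.1 - k p.2|) hmem
    have habs : k ⟨m.val - d, by omega⟩ - k ⟨min m.val (n-1), by omega⟩ ≤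
        pairMax n d (by omega) k := le_trans (le_abs_self _) hp
    rw [abs_le]
    constructor <;> linarith
  · exact pairMax_le hn d k hk
end

section
/- Let A, B be n×n complex Hermitian matrices with 0 ≤ A ≤ 1 and 0 ≤ B ≤ 1 (Loewner order), and let 0 < δ ≤ 1/2. If δ·1 ≤ A ≤ (1−δ)·1, then η(A,B)² ≤ (4/δ)·‖A − B‖₂². If in addition δ·1 ≤ B ≤ (1−δ)·1, then η(A,B)² ≤ (1/δ)·‖A − B‖₂². -/
open scoped Classical ComplexOrder Matrix

open scoped MatrixOrder in
/-- The positive semidefinite square root of a positive semidefinite matrix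
(junk value `0` if the matrix is not positive semidefinite). -/
noncomputable def msqrt {n : Type*} [Fintype n] [DecidableEq n]
    (A : Matrix n n ℂ) : Matrix n n ℂ :=
  if A.PosSemidef then CFC.sqrt A else 0

/-- The Hilbert-Schmidt (Frobenius) norm of a matrix. -/
noncomputable def frob {n : Type*} [Fintype n]
    (M : Matrix n n ℂ) : ℝ :=
  Real.sqrt (∑ i, ∑ j, ‖M i j‖ ^ 2)

/-- `η(A,B) = ‖√(1−A)·√B − √A·√(1−B)‖₂`. -/
noncomputable def eta {n : Type*} [Fintype n] [DecidableEq n]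
    (A B : Matrix n n ℂ) : ℝ :=
  frob (msqrt (1 - A) * msqrt B - msqrt A * msqrt (1 - B))

/-- The old eigenvalue-based square root of a positive semidefinite matrix. -/
noncomputable def Matrix.PosSemidef.sqrt {n : Type*} [Fintype n] [DecidableEq n]
    {A : Matrix n n ℂ} (hA : A.PosSemidef) : Matrix n n ℂ :=
  (hA.1.eigenvectorUnitary : Matrix n n ℂ) * Matrix.diagonal ((↑) ∘ Real.sqrt ∘ hA.1.eigenvalues)
    * star (hA.1.eigenvectorUnitary : Matrix n n ℂ)

open scoped MatrixOrder in
lemma Matrix.PosSemidef.sqrt_eq_cfcSqrt {n : Type*} [Fintype n] [DecidableEq n]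
    {A : Matrix n n ℂ} (hA : A.PosSemidef) : hA.sqrt = CFC.sqrt A := by
  rw [CFC.sqrt_eq_cfc, cfc_nnreal_eq_real _ A hA.nonneg]
  have hf : (fun x : ℝ => ((NNReal.sqrt x.toNNReal : NNReal) : ℝ)) = Real.sqrt :=
    funext fun x => by rw [Real.sqrt]
  rw [hf]
  rw [hA.1.cfc_eq]
  rfl

open scoped MatrixOrder in
lemma Matrix.PosSemidef.posSemidef_sqrt {n : Type*} [Fintype n] [DecidableEq n]
    {A : Matrix n n ℂ} (hA : A.PosSemidef) : hA.sqrt.PosSemidef := by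
  rw [hA.sqrt_eq_cfcSqrt]
  exact Matrix.nonneg_iff_posSemidef.mp (CFC.sqrt_nonneg A)

open scoped MatrixOrder in
lemma Matrix.PosSemidef.sqrt_mul_self {n : Type*} [Fintype n] [DecidableEq n]
    {A : Matrix n n ℂ} (hA : A.PosSemidef) : hA.sqrt * hA.sqrt = A := by
  rw [hA.sqrt_eq_cfcSqrt]
  exact CFC.sqrt_mul_sqrt_self A hA.nonneg

section aux

variable {n : Type*} [Fintype n] [DecidableEq n]
set_option linter.unusedSectionVars false

open Matrix

/-- A matrix viewed as a Euclidean vector. -/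
noncomputable def toE (M : Matrix n n ℂ) : EuclideanSpace ℂ (n × n) := WithLp.toLp 2 (fun p : n × n => M p.1 p.2)

lemma frob_eq_norm (M : Matrix n n ℂ) : frob M = ‖toE M‖ := by
  rw [frob, EuclideanSpace.norm_eq]
  congr 1
  rw [Fintype.sum_prod_type]
  rfl

lemma frob_nonneg (M : Matrix n n ℂ) : 0 ≤ frob M := Real.sqrt_nonneg _

lemma toE_add (X Y : Matrix n n ℂ) : toE (X + Y) = toE X + toE Y := rfl

lemma toE_neg (X : Matrix n n ℂ) : toE (-X) = -(toE X) := rfl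

lemma frob_add_le (X Y : Matrix n n ℂ) : frob (X + Y) ≤ frob X + frob Y := by
  rw [frob_eq_norm, frob_eq_norm, frob_eq_norm, toE_add]
  exact norm_add_le _ _

lemma frob_neg (M : Matrix n n ℂ) : frob (-M) = frob M := by
  rw [frob_eq_norm, frob_eq_norm, toE_neg, norm_neg]

lemma trace_conjTranspose_mul (S R : Matrix n n ℂ) :
    Matrix.trace (Sᴴ * R) = (inner ℂ (toE S) (toE R) : ℂ) := by
  rw [Matrix.trace]
  simp only [Matrix.diag_apply, Matrix.mul_apply, Matrix.conjTranspose_apply]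
  rw [Finset.sum_comm]
  simp only [PiLp.inner_apply, RCLike.inner_apply, toE, Fintype.sum_prod_type]
  refine Finset.sum_congr rfl fun _ _ => Finset.sum_congr rfl fun _ _ => ?_
  exact mul_comm _ _

lemma re_trace_sq (S : Matrix n n ℂ) : (Matrix.trace (Sᴴ * S)).re = frob S ^ 2 := by
  rw [trace_conjTranspose_mul, frob_eq_norm]
  simpa using inner_self_eq_norm_sq (𝕜 := ℂ) (toE S)

lemma re_trace_le (S R : Matrix n n ℂ) :
    (Matrix.trace (Sᴴ * R)).re ≤ frob S * frob R := by
  rw [trace_conjTranspose_mul, frob_eq_norm, frob_eq_norm]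
  simpa using re_inner_le_norm (𝕜 := ℂ) (toE S) (toE R)

lemma re_trace_nonneg {C : Matrix n n ℂ} (hC : C.PosSemidef) :
    0 ≤ (Matrix.trace C).re := by
  have h1 : C = hC.sqrtᴴ * hC.sqrt := by
    rw [hC.posSemidef_sqrt.1, hC.sqrt_mul_self]
  rw [h1, re_trace_sq]
  positivity

end aux

section aux2

variable {n : Type*} [Fintype n] [DecidableEq n]
set_option linter.unusedSectionVars false

open Matrix

lemma sylvester_bound {M N S R : Matrix n n ℂ} {a b : ℝ}
    (hM : (M - (a : ℂ) • 1).PosSemidef) (hN : (N - (b : ℂ) • 1).PosSemidef)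
    (heq : M * S + S * N = R) : (a + b) * frob S ≤ frob R := by
  have e1 : Sᴴ * M * S = Sᴴ * (M - (a : ℂ) • 1) * S + (a : ℂ) • (Sᴴ * S) := by
    simp only [Matrix.mul_sub, Matrix.sub_mul, Matrix.mul_smul, Matrix.smul_mul, mul_one]
    abel
  have e2 : S * N * Sᴴ = S * (N - (b : ℂ) • 1) * Sᴴ + (b : ℂ) • (S * Sᴴ) := by
    simp only [Matrix.mul_sub, Matrix.sub_mul, Matrix.mul_smul, Matrix.smul_mul, mul_one]
    abel
  have key : (a + b) * frob S ^ 2 ≤ (Matrix.trace (Sᴴ * R)).re := by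
    have hsplit : Sᴴ * R = Sᴴ * M * S + S * N * Sᴴ → True := fun _ => trivial
    have h1 : (Matrix.trace (Sᴴ * R)).re
        = (Matrix.trace (Sᴴ * M * S)).re + (Matrix.trace (S * N * Sᴴ)).re := by
      rw [← heq, Matrix.mul_add, Matrix.trace_add, Complex.add_re]
      congr 2
      · rw [Matrix.mul_assoc]
      · rw [Matrix.trace_mul_comm, Matrix.mul_assoc]
    have h2 : a * frob S ^ 2 ≤ (Matrix.trace (Sᴴ * M * S)).re := by
      rw [e1, Matrix.trace_add, Matrix.trace_smul, Complex.add_re]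
      have hpos := re_trace_nonneg (hM.conjTranspose_mul_mul_same S)
      have : ((a : ℂ) • Matrix.trace (Sᴴ * S)).re = a * frob S ^ 2 := by
        rw [smul_eq_mul, Complex.re_ofReal_mul, re_trace_sq]
      linarith
    have h3 : b * frob S ^ 2 ≤ (Matrix.trace (S * N * Sᴴ)).re := by
      rw [e2, Matrix.trace_add, Matrix.trace_smul, Complex.add_re]
      have hpos := re_trace_nonneg (hN.mul_mul_conjTranspose_same S)
      have : ((b : ℂ) • Matrix.trace (S * Sᴴ)).re = b * frob S ^ 2 := by
        rw [smul_eq_mul, Complex.re_ofReal_mul, Matrix.trace_mul_comm, re_trace_sq]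
      linarith
    rw [h1]; nlinarith [h2, h3]
  have key2 : (a + b) * frob S ^ 2 ≤ frob S * frob R := key.trans (re_trace_le S R)
  rcases (frob_nonneg S).eq_or_lt with h0 | h0
  · rw [← h0, mul_zero]
    exact frob_nonneg R
  · have h4 : (a + b) * frob S * frob S ≤ frob R * frob S := by
      calc (a + b) * frob S * frob S = (a + b) * frob S ^ 2 := by ring
        _ ≤ frob S * frob R := key2
        _ = frob R * frob S := mul_comm _ _
    exact le_of_mul_le_mul_right h4 h0

lemma frob_mul_le {M K : Matrix n n ℂ} (hM : M.IsHermitian)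
    (h1 : ((1 : Matrix n n ℂ) - M * M).PosSemidef) : frob (M * K) ≤ frob K := by
  have hsq : frob (M * K) ^ 2 ≤ frob K ^ 2 := by
    have e : Kᴴ * ((1 : Matrix n n ℂ) - M * M) * K = Kᴴ * K - (M * K)ᴴ * (M * K) := by
      have h2 : (M * K)ᴴ = Kᴴ * M := by rw [Matrix.conjTranspose_mul, hM.eq]
      rw [h2]
      noncomm_ring
    have h3 := re_trace_nonneg (h1.conjTranspose_mul_mul_same K)
    rw [e, Matrix.trace_sub, Complex.sub_re, re_trace_sq, re_trace_sq] at h3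
    linarith
  calc frob (M * K) = Real.sqrt (frob (M * K) ^ 2) := (Real.sqrt_sq (frob_nonneg _)).symm
    _ ≤ Real.sqrt (frob K ^ 2) := Real.sqrt_le_sqrt hsq
    _ = frob K := Real.sqrt_sq (frob_nonneg _)

end aux2

section aux3

variable {n : Type*} [Fintype n] [DecidableEq n]
set_option linter.unusedSectionVars false

open Matrix

lemma commute_sqrt {A X : Matrix n n ℂ} (hA : A.PosSemidef) (h : X * A = A * X) :
    X * hA.sqrt = hA.sqrt * X := by
  set U : Matrix n n ℂ := (hA.1.eigenvectorUnitary : Matrix n n ℂ) with hU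
  have hU1 : U * star U = 1 := Matrix.mem_unitaryGroup_iff.mp hA.1.eigenvectorUnitary.2
  have hU2 : star U * U = 1 := Matrix.mem_unitaryGroup_iff'.mp hA.1.eigenvectorUnitary.2
  set W : Matrix n n ℂ := star U * X * U with hW
  set dA : n → ℂ := fun i => ((hA.1.eigenvalues i : ℝ) : ℂ) with hdA
  set dS : n → ℂ := fun i => ((Real.sqrt (hA.1.eigenvalues i) : ℝ) : ℂ) with hdS
  have hspec : A = U * Matrix.diagonal dA * star U := hA.1.spectral_theorem
  have hsqrt : hA.sqrt = U * Matrix.diagonal dS * star U := rfl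
  have hWD : W * Matrix.diagonal dA = Matrix.diagonal dA * W := by
    have e1 : W * Matrix.diagonal dA = star U * (X * A) * U := by
      rw [hW, hspec]
      simp only [Matrix.mul_assoc]
      rw [hU2, Matrix.mul_one]
    have hcalc1 : ∀ Y : Matrix n n ℂ, star U * (U * Y) = Y := by
      intro Y; rw [← Matrix.mul_assoc, hU2, Matrix.one_mul]
    have e2 : Matrix.diagonal dA * W = star U * (A * X) * U := by
      rw [hW, hspec]
      simp only [Matrix.mul_assoc, hcalc1]
    rw [e1, e2, h]
  have hWD' : W * Matrix.diagonal dS = Matrix.diagonal dS * W := by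
    ext i j
    have hij := congrFun (congrFun hWD i) j
    rw [show (W * Matrix.diagonal dA) i j = W i j * dA j from Matrix.mul_diagonal _ _ _ _,
      show (Matrix.diagonal dA * W) i j = dA i * W i j from Matrix.diagonal_mul _ _ _ _] at hij
    rw [show (W * Matrix.diagonal dS) i j = W i j * dS j from Matrix.mul_diagonal _ _ _ _,
      show (Matrix.diagonal dS * W) i j = dS i * W i j from Matrix.diagonal_mul _ _ _ _]
    rcases eq_or_ne (W i j) 0 with h0 | h0
    · simp [h0]
    · have hlam : hA.1.eigenvalues j = hA.1.eigenvalues i := by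
        rw [mul_comm (dA i) (W i j)] at hij
        have h2 := mul_left_cancel₀ h0 hij
        have h2' : ((hA.1.eigenvalues j : ℝ) : ℂ) = ((hA.1.eigenvalues i : ℝ) : ℂ) := h2
        exact_mod_cast h2' 
      have h3 : dS j = dS i := by rw [hdS]; simp [hlam]
      rw [h3, mul_comm]
  have hX : X = U * W * star U := by
    rw [hW]
    simp only [Matrix.mul_assoc]
    rw [hU1, Matrix.mul_one]
    simp only [← Matrix.mul_assoc]
    rw [hU1, Matrix.one_mul]
  rw [hsqrt, hX]
  calc U * W * star U * (U * Matrix.diagonal dS * star U)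
      = U * (W * (star U * U) * Matrix.diagonal dS) * star U := by
        simp only [Matrix.mul_assoc]
    _ = U * (W * Matrix.diagonal dS) * star U := by rw [hU2, Matrix.mul_one]
    _ = U * (Matrix.diagonal dS * W) * star U := by rw [hWD']
    _ = U * (Matrix.diagonal dS * (star U * U) * W) * star U := by
        rw [hU2, Matrix.mul_one]
    _ = U * Matrix.diagonal dS * star U * (U * W * star U) := by
        simp only [Matrix.mul_assoc]

lemma sqrt_sub_smul {A : Matrix n n ℂ} (hA : A.PosSemidef) {c : ℝ}
    (h : (A - (c : ℂ) • 1).PosSemidef) :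
    (hA.sqrt - ((Real.sqrt c : ℝ) : ℂ) • 1).PosSemidef := by
  set U : Matrix n n ℂ := (hA.1.eigenvectorUnitary : Matrix n n ℂ) with hU
  have hU1 : U * star U = 1 := Matrix.mem_unitaryGroup_iff.mp hA.1.eigenvectorUnitary.2
  have heig : ∀ i, c ≤ hA.1.eigenvalues i := by
    intro i
    have hv := hA.1.mulVec_eigenvectorBasis i
    have h2 := h.dotProduct_mulVec_nonneg (⇑(hA.1.eigenvectorBasis i))
    have hnorm : dotProduct (star (⇑(hA.1.eigenvectorBasis i)))
        (⇑(hA.1.eigenvectorBasis i)) = 1 := by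
      have h3 := hA.1.eigenvectorBasis.orthonormal.1 i
      have h4 := inner_self_eq_norm_sq_to_K (𝕜 := ℂ) (hA.1.eigenvectorBasis i)
      rw [EuclideanSpace.inner_eq_star_dotProduct] at h4
      rw [h3] at h4
      rw [dotProduct_comm]
      simpa using h4
    rw [Matrix.sub_mulVec, Matrix.smul_mulVec, Matrix.one_mulVec, hv,
      dotProduct_sub] at h2
    rw [RCLike.real_smul_eq_coe_smul (K := ℂ)] at h2
    rw [dotProduct_smul, dotProduct_smul] at h2
    rw [hnorm] at h2
    simp only [smul_eq_mul, mul_one] at h2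
    have : (0 : ℂ) ≤ ((hA.1.eigenvalues i - c : ℝ) : ℂ) := by push_cast; exact h2
    rw [Complex.zero_le_real] at this
    linarith
  have hkey : hA.sqrt - ((Real.sqrt c : ℝ) : ℂ) • 1
      = U * Matrix.diagonal (fun i => (((Real.sqrt (hA.1.eigenvalues i) : ℝ) : ℂ)
          - ((Real.sqrt c : ℝ) : ℂ))) * star U := by
    have h1 : hA.sqrt = U * Matrix.diagonal ((↑) ∘ Real.sqrt ∘ hA.1.eigenvalues) * star U := rfl
    have h2 : ((Real.sqrt c : ℝ) : ℂ) • (1 : Matrix n n ℂ)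
        = U * Matrix.diagonal (fun _ => ((Real.sqrt c : ℝ) : ℂ)) * star U := by
      rw [← Matrix.smul_one_eq_diagonal]
      rw [Matrix.mul_smul, Matrix.smul_mul, Matrix.mul_one, hU1]
    rw [h1, h2, ← Matrix.sub_mul, ← Matrix.mul_sub, Matrix.diagonal_sub]
    rfl
  rw [hkey]
  have hdiag : (Matrix.diagonal (fun i => (((Real.sqrt (hA.1.eigenvalues i) : ℝ) : ℂ)
      - ((Real.sqrt c : ℝ) : ℂ)))).PosSemidef := by
    refine Matrix.posSemidef_diagonal_iff.mpr fun i => ?_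
    have : Real.sqrt c ≤ Real.sqrt (hA.1.eigenvalues i) := Real.sqrt_le_sqrt (heig i)
    have h5 : (0 : ℂ) ≤ ((Real.sqrt (hA.1.eigenvalues i) - Real.sqrt c : ℝ) : ℂ) := by
      rw [Complex.zero_le_real]; linarith
    push_cast at h5 ⊢
    exact h5
  have h6 := hdiag.mul_mul_conjTranspose_same U
  rwa [← Matrix.star_eq_conjTranspose] at h6

end aux3

theorem eta_bound_of_bounded_spectrum {n : ℕ}
    (A B : Matrix (Fin n) (Fin n) ℂ) (δ : ℝ) (hδ : 0 < δ) (hδ' : δ ≤ 1 / 2)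
    (hA : A.PosSemidef) (hA1 : (1 - A).PosSemidef)
    (hB : B.PosSemidef) (hB1 : (1 - B).PosSemidef)
    (hAlo : (A - (δ : ℂ) • 1).PosSemidef)
    (hAhi : (((1 - δ : ℝ) : ℂ) • 1 - A).PosSemidef) :
    eta A B ^ 2 ≤ (4 / δ) * frob (A - B) ^ 2 ∧
      ((B - (δ : ℂ) • 1).PosSemidef ∧ (((1 - δ : ℝ) : ℂ) • 1 - B).PosSemidef →
        eta A B ^ 2 ≤ (1 / δ) * frob (A - B) ^ 2) := by
  have hmA : msqrt A = hA.sqrt := by rw [msqrt, if_pos hA, hA.sqrt_eq_cfcSqrt]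
  have hmA1 : msqrt (1 - A) = hA1.sqrt := by rw [msqrt, if_pos hA1, hA1.sqrt_eq_cfcSqrt]
  have hmB : msqrt B = hB.sqrt := by rw [msqrt, if_pos hB, hB.sqrt_eq_cfcSqrt]
  have hmB1 : msqrt (1 - B) = hB1.sqrt := by rw [msqrt, if_pos hB1, hB1.sqrt_eq_cfcSqrt]
  set P := hA.sqrt with hP
  set P' := hA1.sqrt with hP'
  set Q := hB.sqrt with hQ
  set Q' := hB1.sqrt with hQ'
  have heta : eta A B = frob (P' * Q - P * Q') := by
    simp only [eta, hmA, hmA1, hmB, hmB1]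
  set s := Real.sqrt δ with hs
  have hspos : 0 < s := Real.sqrt_pos.mpr hδ
  have hs2 : s ^ 2 = δ := Real.sq_sqrt hδ.le
  have hA1lo : ((1 - A) - (δ : ℂ) • 1).PosSemidef := by
    have he : ((1 : Matrix (Fin n) (Fin n) ℂ) - A) - (δ : ℂ) • 1
        = (((1 - δ : ℝ)) : ℂ) • 1 - A := by
      rw [show (((1 - δ : ℝ)) : ℂ) = 1 - (δ : ℂ) by push_cast; ring, sub_smul, one_smul]
      abel
    rw [he]; exact hAhi
  have hPlo : (P - (s : ℂ) • 1).PosSemidef := sqrt_sub_smul hA hAlo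
  have hP'lo : (P' - (s : ℂ) • 1).PosSemidef := sqrt_sub_smul hA1 hA1lo
  have hQ0 : (Q - ((0 : ℝ) : ℂ) • 1).PosSemidef := by simpa using hB.posSemidef_sqrt
  have hQ'0 : (Q' - ((0 : ℝ) : ℂ) • 1).PosSemidef := by simpa using hB1.posSemidef_sqrt
  have hS1 : Q * (Q - P) + (Q - P) * P = B - A := by
    rw [Matrix.mul_sub, Matrix.sub_mul, hB.sqrt_mul_self, hA.sqrt_mul_self]
    abel
  have hS2 : P' * (P' - Q') + (P' - Q') * Q' = B - A := by
    rw [Matrix.mul_sub, Matrix.sub_mul, hA1.sqrt_mul_self, hB1.sqrt_mul_self]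
    abel
  have hPP' : P' * P = P * P' := by
    have h1 : P' * (1 - A) = (1 - A) * P' := by
      conv_lhs => rw [← hA1.sqrt_mul_self]
      conv_rhs => rw [← hA1.sqrt_mul_self]
      rw [Matrix.mul_assoc]
    have h2 : P' * A = A * P' := by
      rw [Matrix.mul_sub, Matrix.sub_mul, Matrix.mul_one, Matrix.one_mul] at h1
      exact sub_right_inj.mp h1
    exact commute_sqrt hA h2
  have hdec : P' * Q - P * Q' = P' * (Q - P) + P * (P' - Q') := by
    rw [Matrix.mul_sub, Matrix.mul_sub, ← hPP']
    abel
  have hcon1 : frob (P' * (Q - P)) ≤ frob (Q - P) := by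
    apply frob_mul_le hA1.posSemidef_sqrt.1
    have he : (1 : Matrix (Fin n) (Fin n) ℂ) - P' * P' = A := by
      rw [hA1.sqrt_mul_self]; exact sub_sub_cancel 1 A
    rw [he]; exact hA
  have hcon2 : frob (P * (P' - Q')) ≤ frob (P' - Q') := by
    apply frob_mul_le hA.posSemidef_sqrt.1
    have he : (1 : Matrix (Fin n) (Fin n) ℂ) - P * P = 1 - A := by rw [hA.sqrt_mul_self]
    rw [he]; exact hA1
  have hfBA : frob (B - A) = frob (A - B) := by
    rw [show B - A = -(A - B) from (neg_sub A B).symm, frob_neg]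
  have hb1 : ((0 : ℝ) + s) * frob (Q - P) ≤ frob (B - A) := sylvester_bound hQ0 hPlo hS1
  have hb2 : (s + (0 : ℝ)) * frob (P' - Q') ≤ frob (B - A) := sylvester_bound hP'lo hQ'0 hS2
  rw [zero_add, hfBA] at hb1
  rw [add_zero, hfBA] at hb2
  set f := frob (A - B) with hf
  have hfnn : 0 ≤ f := frob_nonneg _
  have hQP : frob (Q - P) ≤ f / s := by rw [le_div_iff₀ hspos]; linarith
  have hPQ' : frob (P' - Q') ≤ f / s := by rw [le_div_iff₀ hspos]; linarith
  constructor
  · have hXb : frob (P' * Q - P * Q') ≤ 2 * f / s := by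
      rw [hdec]
      calc frob (P' * (Q - P) + P * (P' - Q'))
          ≤ frob (P' * (Q - P)) + frob (P * (P' - Q')) := frob_add_le _ _
        _ ≤ frob (Q - P) + frob (P' - Q') := add_le_add hcon1 hcon2
        _ ≤ f / s + f / s := add_le_add hQP hPQ'
        _ = 2 * f / s := by ring
    have h2 : eta A B ^ 2 ≤ (2 * f / s) ^ 2 := by
      apply pow_le_pow_left₀ (by rw [heta]; exact frob_nonneg _)
      rw [heta]; exact hXb
    calc eta A B ^ 2 ≤ (2 * f / s) ^ 2 := h2
      _ = 4 / δ * f ^ 2 := by rw [div_pow, mul_pow, hs2]; ring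
  · rintro ⟨hBlo, hBhi⟩
    have hB1lo : ((1 - B) - (δ : ℂ) • 1).PosSemidef := by
      have he : ((1 : Matrix (Fin n) (Fin n) ℂ) - B) - (δ : ℂ) • 1
          = (((1 - δ : ℝ)) : ℂ) • 1 - B := by
        rw [show (((1 - δ : ℝ)) : ℂ) = 1 - (δ : ℂ) by push_cast; ring, sub_smul, one_smul]
        abel
      rw [he]; exact hBhi
    have hQlo : (Q - (s : ℂ) • 1).PosSemidef := sqrt_sub_smul hB hBlo
    have hQ'lo : (Q' - (s : ℂ) • 1).PosSemidef := sqrt_sub_smul hB1 hB1lo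
    have hb1' : (s + s) * frob (Q - P) ≤ frob (B - A) := sylvester_bound hQlo hPlo hS1
    have hb2' : (s + s) * frob (P' - Q') ≤ frob (B - A) := sylvester_bound hP'lo hQ'lo hS2
    rw [hfBA] at hb1' hb2'
    have hQP2 : frob (Q - P) ≤ f / (2 * s) := by
      rw [le_div_iff₀ (by positivity)]; linarith
    have hPQ'2 : frob (P' - Q') ≤ f / (2 * s) := by
      rw [le_div_iff₀ (by positivity)]; linarith
    have hXb' : frob (P' * Q - P * Q') ≤ f / s := by
      rw [hdec]
      calc frob (P' * (Q - P) + P * (P' - Q'))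
          ≤ frob (P' * (Q - P)) + frob (P * (P' - Q')) := frob_add_le _ _
        _ ≤ frob (Q - P) + frob (P' - Q') := add_le_add hcon1 hcon2
        _ ≤ f / (2 * s) + f / (2 * s) := add_le_add hQP2 hPQ'2
        _ = f / s := by field_simp; ring
    have h2 : eta A B ^ 2 ≤ (f / s) ^ 2 := by
      apply pow_le_pow_left₀ (by rw [heta]; exact frob_nonneg _)
      rw [heta]; exact hXb'
    calc eta A B ^ 2 ≤ (f / s) ^ 2 := h2
      _ = 1 / δ * f ^ 2 := by rw [div_pow, hs2]; ring
end

section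
/- Let k ∈ ℝ^m and f, g ∈ ℝ^d be arbitrary real vectors. Then ‖(k ⊕ f)↓ − (k ⊕ g)↓‖₁ ≥ ‖f↓ − g↓‖₁, where ‖·‖₁ denotes the ℓ¹ norm on vectors. -/
namespace SortDescAux

open Finset

/-- Counting function: number of entries exceeding `t`. -/
noncomputable def cnt {n : ℕ} (v : Fin n → ℝ) (t : ℝ) : ℕ :=
  (Finset.univ.filter fun i => t < v i).card

lemma cnt_le {n : ℕ} (v : Fin n → ℝ) (t : ℝ) : cnt v t ≤ n := by
  classical
  have := Finset.card_filter_le (Finset.univ : Finset (Fin n)) (fun i => t < v i)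
  simpa [cnt] using this

lemma cnt_comp_equiv {n : ℕ} (v : Fin n → ℝ) (e : Equiv.Perm (Fin n)) (t : ℝ) :
    cnt (fun i => v (e i)) t = cnt v t := by
  classical
  unfold cnt
  rw [Finset.card_filter, Finset.card_filter]
  exact Fintype.sum_equiv e _ _ (fun i => rfl)

lemma cnt_sortDesc {n : ℕ} (v : Fin n → ℝ) (t : ℝ) : cnt (sortDesc v) t = cnt v t := by
  unfold sortDesc
  exact cnt_comp_equiv v (Tuple.sort fun j => -v j) t

lemma sum_sortDesc {n : ℕ} (v : Fin n → ℝ) : ∑ i, sortDesc v i = ∑ i, v i := by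
  unfold sortDesc
  exact Equiv.sum_comp (Tuple.sort fun j => -v j) v

lemma antitone_sortDesc {n : ℕ} (v : Fin n → ℝ) : Antitone (sortDesc v) := by
  have h := Tuple.monotone_sort (fun j => -v j)
  intro i j hij
  have h2 := h hij
  simp only [Function.comp] at h2
  simp only [sortDesc]
  linarith

lemma lt_iff_lt_cnt {n : ℕ} {a : Fin n → ℝ} (ha : Antitone a) (t : ℝ) (i : Fin n) :
    t < a i ↔ (i : ℕ) < cnt a t := by
  classical
  unfold cnt
  constructor
  · intro h
    have hsub : Finset.Iic i ⊆ Finset.univ.filter fun j => t < a j := by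
      intro j hj
      simp only [Finset.mem_Iic] at hj
      simp only [Finset.mem_filter, Finset.mem_univ, true_and]
      exact lt_of_lt_of_le h (ha hj)
    have hc := Finset.card_le_card hsub
    rw [Fin.card_Iic] at hc
    exact lt_of_lt_of_le (Nat.lt_succ_self _) hc
  · intro h
    by_contra hc
    push_neg at hc
    have hsub : (Finset.univ.filter fun j => t < a j) ⊆ Finset.Iio i := by
      intro j hj
      simp only [Finset.mem_filter, Finset.mem_univ, true_and] at hj
      rw [Finset.mem_Iio]
      by_contra hji
      push_neg at hji
      exact absurd (lt_of_lt_of_le hj (ha hji)) (not_lt.2 hc)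
    have hcard := Finset.card_le_card hsub
    rw [Fin.card_Iio] at hcard
    omega

lemma card_val_lt {n : ℕ} (c : ℕ) (h : c ≤ n) :
    (Finset.univ.filter fun i : Fin n => (i : ℕ) < c).card = c := by
  classical
  rw [Finset.card_filter, Fin.sum_univ_eq_sum_range (fun x => if x < c then 1 else 0) n,
    ← Finset.card_filter]
  have : (Finset.range n).filter (fun x => x < c) = Finset.range c := by
    ext x
    simp only [Finset.mem_filter, Finset.mem_range]
    omega
  rw [this, Finset.card_range]

lemma cnt_max {n : ℕ} {x y : Fin n → ℝ} (hx : Antitone x) (hy : Antitone y) (t : ℝ) :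
    cnt (fun i => max (x i) (y i)) t = max (cnt x t) (cnt y t) := by
  classical
  have hpred : ∀ i ∈ (Finset.univ : Finset (Fin n)),
      (t < max (x i) (y i)) ↔ ((i : ℕ) < max (cnt x t) (cnt y t)) := by
    intro i _
    rw [lt_max_iff, lt_iff_lt_cnt hx, lt_iff_lt_cnt hy]
    omega
  unfold cnt
  rw [Finset.filter_congr hpred]
  exact card_val_lt _ (max_le (cnt_le x t) (cnt_le y t))

lemma cnt_min {n : ℕ} {x y : Fin n → ℝ} (hx : Antitone x) (hy : Antitone y) (t : ℝ) :
    cnt (fun i => min (x i) (y i)) t = min (cnt x t) (cnt y t) := by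
  classical
  have hpred : ∀ i ∈ (Finset.univ : Finset (Fin n)),
      (t < min (x i) (y i)) ↔ ((i : ℕ) < min (cnt x t) (cnt y t)) := by
    intro i _
    rw [lt_min_iff, lt_iff_lt_cnt hx, lt_iff_lt_cnt hy]
    omega
  unfold cnt
  rw [Finset.filter_congr hpred]
  exact card_val_lt _ (le_trans (min_le_left _ _) (cnt_le x t))

lemma cnt_append {m d : ℕ} (k : Fin m → ℝ) (f : Fin d → ℝ) (t : ℝ) :
    cnt (Fin.append k f) t = cnt k t + cnt f t := by
  classical
  unfold cnt
  rw [Finset.card_filter, Finset.card_filter, Finset.card_filter, Fin.sum_univ_add]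
  simp [Fin.append_left, Fin.append_right]

lemma antitone_le_of_cnt {n : ℕ} {x y : Fin n → ℝ} (hx : Antitone x) (hy : Antitone y)
    (h : ∀ t, cnt x t = cnt y t) (i : Fin n) : x i ≤ y i := by
  by_contra hlt
  push_neg at hlt
  have h1 : (i : ℕ) < cnt x (y i) := (lt_iff_lt_cnt hx _ _).1 hlt
  rw [h] at h1
  exact lt_irrefl _ ((lt_iff_lt_cnt hy (y i) i).2 h1)

lemma antitone_eq_of_cnt {n : ℕ} {x y : Fin n → ℝ} (hx : Antitone x) (hy : Antitone y)
    (h : ∀ t, cnt x t = cnt y t) : x = y :=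
  funext fun i => le_antisymm (antitone_le_of_cnt hx hy h i)
    (antitone_le_of_cnt hy hx (fun t => (h t).symm) i)

end SortDescAux

open SortDescAux in
theorem l1_dist_append_sorted_ge (m d : ℕ) (k : Fin m → ℝ) (f g : Fin d → ℝ) :
    ∑ i, |sortDesc f i - sortDesc g i| ≤
      ∑ i, |sortDesc (Fin.append k f) i - sortDesc (Fin.append k g) i| := by
  classical
  set A := sortDesc (Fin.append k f) with hA
  set B := sortDesc (Fin.append k g) with hB
  set a := sortDesc f with ha
  set b := sortDesc g with hb
  have hAm : Antitone A := antitone_sortDesc _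
  have hBm : Antitone B := antitone_sortDesc _
  have ham : Antitone a := antitone_sortDesc _
  have hbm : Antitone b := antitone_sortDesc _
  have cA : ∀ t, cnt A t = cnt k t + cnt f t := fun t => by
    rw [hA, cnt_sortDesc, cnt_append]
  have cB : ∀ t, cnt B t = cnt k t + cnt g t := fun t => by
    rw [hB, cnt_sortDesc, cnt_append]
  have ca : ∀ t, cnt a t = cnt f t := fun t => by rw [ha, cnt_sortDesc]
  have cb : ∀ t, cnt b t = cnt g t := fun t => by rw [hb, cnt_sortDesc]
  -- max part
  have hmax : (fun i => max (A i) (B i)) =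
      sortDesc (Fin.append k (fun i => max (a i) (b i))) := by
    apply antitone_eq_of_cnt (hAm.max hBm) (antitone_sortDesc _)
    intro t
    rw [cnt_max hAm hBm, cA, cB, cnt_sortDesc, cnt_append, cnt_max ham hbm, ca, cb]
    omega
  have hmin : (fun i => min (A i) (B i)) =
      sortDesc (Fin.append k (fun i => min (a i) (b i))) := by
    apply antitone_eq_of_cnt (hAm.min hBm) (antitone_sortDesc _)
    intro t
    rw [cnt_min hAm hBm, cA, cB, cnt_sortDesc, cnt_append, cnt_min ham hbm, ca, cb]
    omega
  have smax : ∑ i, max (A i) (B i) = (∑ i, k i) + ∑ i, max (a i) (b i) := by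
    rw [hmax, sum_sortDesc, Fin.sum_univ_add]
    simp [Fin.append_left, Fin.append_right]
  have smin : ∑ i, min (A i) (B i) = (∑ i, k i) + ∑ i, min (a i) (b i) := by
    rw [hmin, sum_sortDesc, Fin.sum_univ_add]
    simp [Fin.append_left, Fin.append_right]
  have habs : ∀ (u w : ℝ), |u - w| = max u w - min u w := fun u w =>
    (abs_sub_comm u w).trans (max_sub_min_eq_abs u w).symm
  have key : ∑ i, |a i - b i| = ∑ i, |A i - B i| := by
    calc ∑ i, |a i - b i| = ∑ i, (max (a i) (b i) - min (a i) (b i)) := by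
          simp_rw [habs]
      _ = (∑ i, max (a i) (b i)) - ∑ i, min (a i) (b i) := Finset.sum_sub_distrib _ _
      _ = (∑ i, max (A i) (B i)) - ∑ i, min (A i) (B i) := by rw [smax, smin]; ring
      _ = ∑ i, (max (A i) (B i) - min (A i) (B i)) := (Finset.sum_sub_distrib _ _).symm
      _ = ∑ i, |A i - B i| := by simp_rw [habs]
  exact le_of_eq key
end
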